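/- Let k be a field, A a finite-dimensional k-algebra, and fix sets S_0 ⊆ S_1 of isomorphism classes of simple right A-modules. Let S_y be a simple module with class in S_1∖S_0 and S_x a simple module with class not in S_1. Let U_y be the largest submodule of the injective hull of S_y such that soc(U_y) ≅ S_y and every composition factor of U_y/soc(U_y) lies in S_0, and let U_x be the largest quotient of the projective cover of S_x such that top(U_x) ≅ S_x, every other composition factor of U_x lies in S_1, and every composition factor of soc(U_x) lies in S_1∖S_0. Then Ext^1_A(U_x, U_y) = 0. -/

import Mathlib

open CategoryTheory Limits DerivedCategory Pretriangulated

noncomputable section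
namespace PervSL2


/-- The category of right `A`-modules (as modules over `Aᵐᵒᵖ`). -/
abbrev Mod (A : Type) [Ring A] := ModuleCat.{0} Aᵐᵒᵖ

noncomputable instance (R : Type) [Ring R] : HasDerivedCategory.{1} (ModuleCat.{0} R) :=
  HasDerivedCategory.standard _

/-- A finite-dimensional algebra `A` over `k` is symmetric if it admits a `k`-linear form
`l` with `l (a * b) = l (b * a)` whose kernel contains no nonzero one-sided ideal. -/
def IsSymmetricAlg (k A : Type) [Field k] [Ring A] [Algebra k A] : Prop :=
  ∃ l : A →ₗ[k] k, (∀ a b : A, l (a * b) = l (b * a)) ∧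
    (∀ I : Submodule A A, (∀ x ∈ I, l x = 0) → I = ⊥) ∧
    (∀ I : Submodule Aᵐᵒᵖ A, (∀ x ∈ I, l x = 0) → I = ⊥)

/-- The socle of a module: the sum of all simple (= atomic) submodules. -/
def socle (R : Type) [Ring R] (M : Type) [AddCommGroup M] [Module R M] : Submodule R M :=
  sSup {N : Submodule R M | IsAtom N}

/-- The radical of a module: the intersection of all maximal submodules. -/
def radical (R : Type) [Ring R] (M : Type) [AddCommGroup M] [Module R M] : Submodule R M :=
  sInf {N : Submodule R M | IsCoatom N}

/-- The top (head) of a module: the quotient by its radical. -/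
abbrev headOf (R : Type) [Ring R] (M : Type) [AddCommGroup M] [Module R M] : Type :=
  M ⧸ radical R M

/-- Every simple subquotient of `M` is isomorphic to (the underlying module of) a member
of the family `𝒯`.  This formalizes "all composition factors of `M` lie in `𝒯`". -/
def AllCompFactorsIn (R : Type) [Ring R] (M : Type) [AddCommGroup M] [Module R M]
    (𝒯 : Set (ModuleCat.{0} R)) : Prop :=
  ∀ (N : Submodule R M) (P : Submodule R N), IsSimpleModule R (↥N ⧸ P) →
    ∃ T ∈ 𝒯, Nonempty ((↥N ⧸ P) ≃ₗ[R] ↥T)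

/-- `P` (projective) together with an essential epimorphism onto `M` is a projective
cover of `M`. -/
def IsProjectiveCover (R : Type) [Ring R] (P : Type) [AddCommGroup P] [Module R P]
    (M : Type) [AddCommGroup M] [Module R M] (f : P →ₗ[R] M) : Prop :=
  Module.Projective R P ∧ Function.Surjective f ∧
    ∀ N : Submodule R P, Submodule.map f N = ⊤ → N = ⊤

/-- `I` (injective) together with an essential monomorphism from `M` is an injective
hull of `M`. -/
def IsInjectiveHull (R : Type) [Ring R] (I : Type) [AddCommGroup I] [Module R I]
    (M : Type) [AddCommGroup M] [Module R M] (f : M →ₗ[R] I) : Prop :=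
  Module.Injective R I ∧ Function.Injective f ∧
    ∀ N : Submodule R I, N ⊓ LinearMap.range f = ⊥ → N = ⊥

/-- Scalar multiplication by `c : k` on a right `A`-module, for a `k`-algebra `A`;
this is `A`-linear since the image of `k` is central. -/
def centralSmul (k : Type) [CommRing k] {A : Type} [Ring A] [Algebra k A]
    (c : k) (M : Type) [AddCommGroup M] [Module Aᵐᵒᵖ M] : M →ₗ[Aᵐᵒᵖ] M where
  toFun m := algebraMap k Aᵐᵒᵖ c • m
  map_add' := smul_add _
  map_smul' a m := by
    simp only [RingHom.id_apply]
    rw [← mul_smul, ← mul_smul, Algebra.commutes]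

lemma simpleModuleFinite {R M : Type} [Ring R] [AddCommGroup M] [Module R M]
    (h : IsSimpleModule R M) : Module.Finite R M := by
  haveI := h
  haveI : Nontrivial M := IsSimpleModule.nontrivial R M
  obtain ⟨x, hx⟩ := exists_ne (0 : M)
  have hsp : Submodule.span R ({x} : Set M) = ⊤ := by
    rcases eq_bot_or_eq_top (Submodule.span R ({x} : Set M)) with h' | h'
    · exact absurd (Submodule.span_singleton_eq_bot.mp h') hx
    · exact h'
  exact ⟨⟨{x}, by simpa using hsp⟩⟩

lemma finite_of_isZero {A : Type} [Ring A] (M : Mod A) (h : IsZero M) :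
    Module.Finite Aᵐᵒᵖ M := by
  haveI : Subsingleton M := ModuleCat.subsingleton_of_isZero h
  infer_instance

lemma noetherianRing_op (k A : Type) [Field k] [Ring A] [Algebra k A]
    [FiniteDimensional k A] : IsNoetherianRing Aᵐᵒᵖ := by
  haveI : IsNoetherian k Aᵐᵒᵖ := isNoetherian_of_linearEquiv (MulOpposite.opLinearEquiv k)
  exact isNoetherian_of_tower k inferInstance

lemma finite_submodule (k : Type) [Field k] {A : Type} [Ring A] [Algebra k A]
    [FiniteDimensional k A] {M : Type} [AddCommGroup M] [Module Aᵐᵒᵖ M]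
    (hM : Module.Finite Aᵐᵒᵖ M) (U : Submodule Aᵐᵒᵖ M) : Module.Finite Aᵐᵒᵖ U := by
  haveI := hM
  haveI := noetherianRing_op k A
  haveI : IsNoetherian Aᵐᵒᵖ M := isNoetherian_of_isNoetherianRing_of_finite Aᵐᵒᵖ M
  exact Module.Finite.iff_fg.mpr (IsNoetherian.noetherian U)

lemma finite_quotient {A : Type} [Ring A] {M : Type} [AddCommGroup M] [Module Aᵐᵒᵖ M]
    (hM : Module.Finite Aᵐᵒᵖ M) (N : Submodule Aᵐᵒᵖ M) : Module.Finite Aᵐᵒᵖ (M ⧸ N) := by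
  haveI := hM
  exact Module.Finite.of_surjective N.mkQ (Submodule.mkQ_surjective N)

/-- A complete set of pairwise non-isomorphic representatives of the simple
right modules. -/
structure SimplesFamily (R : Type) [Ring R] (Z : Type) where
  S : Z → ModuleCat.{0} R
  simple : ∀ z, IsSimpleModule R (S z)
  nonIso : ∀ y z : Z, Nonempty ((S y : Type) ≃ₗ[R] (S z : Type)) → y = z
  complete : ∀ (M : Type) (_ : AddCommGroup M) (_ : Module R M),
    IsSimpleModule R M → ∃ z, Nonempty (M ≃ₗ[R] (S z : Type))

lemma SimplesFamily.fin {R : Type} [Ring R] {Z : Type} (SF : SimplesFamily R Z) (z : Z) :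
    Module.Finite R (SF.S z) :=
  simpleModuleFinite (SF.simple z)





variable (A : Type) [Ring A]

/-- The defining property of the bounded derived category of finitely generated right
`A`-modules inside the derived category of all right `A`-modules: bounded homology, all
homology finitely generated. -/
def DbProp (X : DerivedCategory (Mod A)) : Prop :=
  (∃ b : ℕ, ∀ n : ℤ, (b : ℤ) < |n| → IsZero ((homologyFunctor (Mod A) n).obj X)) ∧
  (∀ n : ℤ, Module.Finite Aᵐᵒᵖ ((homologyFunctor (Mod A) n).obj X))

/-- The bounded derived category of finitely generated right `A`-modules. -/
def Db := ObjectProperty.FullSubcategory (DbProp A)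

instance : Category (Db A) := ObjectProperty.FullSubcategory.category _

/-- The homology shift isomorphism in the derived category. -/
def homologyShiftIso (X : DerivedCategory (Mod A)) (n a : ℤ) :
    (homologyFunctor (Mod A) a).obj (X⟦n⟧) ≅ (homologyFunctor (Mod A) (n + a)).obj X :=
  ((homologyFunctor (Mod A) 0).shiftIso n a (n + a) rfl).app X

/-- The shift on the bounded derived category. -/
def DbShift (X : Db A) (n : ℤ) : Db A where
  obj := X.obj⟦n⟧
  property := by
    obtain ⟨⟨b, hb⟩, hfin⟩ := X.property
    constructor
    · refine ⟨b + n.natAbs, fun m hm => ?_⟩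
      refine IsZero.of_iso ?_ (homologyShiftIso A X.obj n m)
      refine hb (n + m) ?_
      have h1 : |m| ≤ |n + m| + |n| := by
        calc |m| = |n + m + -n| := by ring_nf
        _ ≤ |n + m| + |(-n)| := abs_add_le _ _
        _ = |n + m| + |n| := by rw [abs_neg]
      have h2 : (n.natAbs : ℤ) = |n| := Int.abs_eq_natAbs n ▸ rfl
      push_cast at hm
      omega
    · intro m
      haveI := hfin (n + m)
      exact Module.Finite.equiv (homologyShiftIso A X.obj n m).toLinearEquiv.symm

/-- The comparison between the single (stalk) functor to the derived category and the
homology of single complexes. -/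
def singleHomologyIso (M : Mod A) (d m : ℤ) :
    (homologyFunctor (Mod A) m).obj ((singleFunctor (Mod A) d).obj M) ≅
      ((CochainComplex.singleFunctor (Mod A) d).obj M).homology m :=
  (homologyFunctor (Mod A) m).mapIso
      (((SingleFunctors.evaluation _ _ d).mapIso (singleFunctorsPostcompQIso (Mod A))).app M) ≪≫
    (homologyFunctorFactors (Mod A) m).app _

/-- The stalk complex of a finitely generated module `M`, concentrated in degree `d`, as an
object of the bounded derived category `Db A`. -/
def DbSingle (M : Mod A) (hM : Module.Finite Aᵐᵒᵖ M) (d : ℤ) : Db A where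
  obj := (singleFunctor (Mod A) d).obj M
  property := by
    constructor
    · refine ⟨d.natAbs, fun m hm => ?_⟩
      refine IsZero.of_iso ?_ (singleHomologyIso A M d m)
      refine HomologicalComplex.isZero_single_obj_homology _ _ _ _ ?_
      intro h
      subst h
      have h2 : (m.natAbs : ℤ) = |m| := Int.abs_eq_natAbs m ▸ rfl
      omega
    · intro m
      by_cases h : m = d
      · subst h
        haveI := hM
        exact Module.Finite.equiv
          ((singleHomologyIso A M m m).trans
            (HomologicalComplex.singleObjHomologySelfIso _ _ _)).toLinearEquiv.symm
      · refine finite_of_isZero _ (IsZero.of_iso ?_ (singleHomologyIso A M d m))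
        exact HomologicalComplex.isZero_single_obj_homology _ _ _ _ h

variable {A} in
/-- An equivalence on bounded derived categories commuting with shifts (this is the part of
being a triangulated functor we keep track of). -/
def PreservesShift {B : Type} [Ring B] (F : Db A ⥤ Db B) : Prop :=
  ∀ (X : Db A) (n : ℤ), Nonempty (F.obj (DbShift A X n) ≅ DbShift B (F.obj X) n)

/-- The union of the pieces of a filtration strictly below level `i`. -/
def below {Z : Type} (𝒮 : ℕ → Set Z) (i : ℕ) : Set Z := ⋃ j < i, 𝒮 j



-- fg module category and Morita equivalence
def fgMod (R : Type) [Ring R] :=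
  ObjectProperty.FullSubcategory (fun M : ModuleCat.{0} R => Module.Finite R M)

instance (R : Type) [Ring R] : Category (fgMod R) := ObjectProperty.FullSubcategory.category _
instance (R : Type) [Ring R] : Preadditive (fgMod R) := Preadditive.fullSubcategory _

/-- Morita equivalence of `R` and `S`: an additive equivalence between the categories of
finitely generated right modules. -/
def MoritaEquiv (R S : Type) [Ring R] [Ring S] : Prop :=
  ∃ F : fgMod Rᵐᵒᵖ ≌ fgMod Sᵐᵒᵖ, F.functor.Additive

-- homotopy category of cochain complexes of right A-modules
variable (A : Type) [Ring A]

abbrev Kq : CochainComplex (Mod A) ℤ ⥤ HomotopyCategory (Mod A) (ComplexShape.up ℤ) :=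
  HomotopyCategory.quotient (Mod A) (ComplexShape.up ℤ)

/-- `T` is a tilting complex over `A`: a bounded complex of finitely generated projective
right `A`-modules with no nonzero self-`Hom`s in the homotopy category in nonzero shifts,
which generates the bounded homotopy category of finitely generated projectives as a
thick (triangulated, closed under retracts) subcategory. -/
def IsTiltingComplex (T : CochainComplex (Mod A) ℤ) : Prop :=
  (∃ b : ℕ, ∀ n : ℤ, (b : ℤ) < |n| → IsZero (T.X n)) ∧
  (∀ n : ℤ, Module.Projective Aᵐᵒᵖ (T.X n) ∧ Module.Finite Aᵐᵒᵖ (T.X n)) ∧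
  (∀ n : ℤ, n ≠ 0 → ∀ f : (Kq A).obj T ⟶ ((Kq A).obj T)⟦n⟧, f = 0) ∧
  (∀ W : Set (HomotopyCategory (Mod A) (ComplexShape.up ℤ)),
    (Kq A).obj T ∈ W →
    (∀ X Y, X ∈ W → Nonempty (X ≅ Y) → Y ∈ W) →
    (∀ X, X ∈ W → ∀ n : ℤ, X⟦n⟧ ∈ W) →
    (∀ Tr : Triangle (HomotopyCategory (Mod A) (ComplexShape.up ℤ)),
      (Tr ∈ distTriang (HomotopyCategory (Mod A) (ComplexShape.up ℤ))) → Tr.obj₁ ∈ W → Tr.obj₂ ∈ W → Tr.obj₃ ∈ W) →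
    (∀ X Y : HomotopyCategory (Mod A) (ComplexShape.up ℤ),
      (∃ (i : X ⟶ Y) (r : Y ⟶ X), i ≫ r = 𝟙 X) → Y ∈ W → X ∈ W) →
    ∀ K : CochainComplex (Mod A) ℤ,
      (∃ b : ℕ, ∀ n : ℤ, (b : ℤ) < |n| → IsZero (K.X n)) →
      (∀ n : ℤ, Module.Projective Aᵐᵒᵖ (K.X n) ∧ Module.Finite Aᵐᵒᵖ (K.X n)) →
      (Kq A).obj K ∈ W)

instance : HasFiniteBiproducts (CochainComplex (Mod A) ℤ) :=
  HasFiniteBiproducts.of_hasFiniteProducts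

/-- Dreyfus-Schmidt's definition of a perverse equivalence `F : D^b(A) → D^b(B)` relative to
filtrations `𝒮`, `𝒯` (given as increasing chains of index sets for the fixed complete
families `SA`, `SB` of simple modules, exhausted at stage `n`), a perversity function `π`,
and with induced bijection `β` of simple modules. -/
def IsPerverseWith {A B : Type} [Ring A] [Ring B] (F : Db A ⥤ Db B)
    {ZA ZB : Type} (SA : SimplesFamily Aᵐᵒᵖ ZA) (SB : SimplesFamily Bᵐᵒᵖ ZB)
    (n : ℕ) (𝒮 : ℕ → Set ZA) (𝒯 : ℕ → Set ZB) (π : ℕ → ℤ) (β : ZA ≃ ZB) : Prop :=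
  Monotone 𝒮 ∧ Monotone 𝒯 ∧ 𝒮 n = Set.univ ∧ 𝒯 n = Set.univ ∧
  (∀ (i : ℕ) (z : ZA), z ∈ 𝒮 i ↔ β z ∈ 𝒯 i) ∧
  ∀ (i : ℕ) (z : ZA), i ≤ n → z ∈ 𝒮 i → z ∉ below 𝒮 i →
    (∀ m : ℤ, m ≠ -π i →
      AllCompFactorsIn Bᵐᵒᵖ
        ((homologyFunctor (Mod B) m).obj ((F.obj (DbSingle A (SA.S z) (SA.fin z) 0)).obj))
        (SB.S '' below 𝒯 i)) ∧
    ∃ (L₁ L₂ : Submodule Bᵐᵒᵖ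
        ((homologyFunctor (Mod B) (-π i)).obj ((F.obj (DbSingle A (SA.S z) (SA.fin z) 0)).obj))),
      L₁ ≤ L₂ ∧
      AllCompFactorsIn Bᵐᵒᵖ (↥L₁) (SB.S '' below 𝒯 i) ∧
      AllCompFactorsIn Bᵐᵒᵖ
        (((homologyFunctor (Mod B) (-π i)).obj
            ((F.obj (DbSingle A (SA.S z) (SA.fin z) 0)).obj)) ⧸ L₂)
        (SB.S '' below 𝒯 i) ∧
      Nonempty ((↥L₂ ⧸ L₁.comap L₂.subtype) ≃ₗ[Bᵐᵒᵖ] ((SB.S (β z) : Type)))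

/-- A perverse equivalence: perverse relative to the given filtrations and function for some
induced bijection of simple modules. -/
def IsPerverse {A B : Type} [Ring A] [Ring B] (F : Db A ⥤ Db B)
    {ZA ZB : Type} (SA : SimplesFamily Aᵐᵒᵖ ZA) (SB : SimplesFamily Bᵐᵒᵖ ZB)
    (n : ℕ) (𝒮 : ℕ → Set ZA) (𝒯 : ℕ → Set ZB) (π : ℕ → ℤ) : Prop :=
  ∃ β : ZA ≃ ZB, IsPerverseWith F SA SB n 𝒮 𝒯 π β

/-- The perversity function of (simply) alternating perverse equivalences:
`π(0) = 0`, `π(1) = 1`, `π(2) = 0`. -/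
def altπ : ℕ → ℤ := fun i => if i = 1 then 1 else 0

/-! Lift `p` along `P_x → U_x` by projectivity of `P_x`: the lift embeds a quotient `P_x ⧸ N`,
`N ≤ N_x`, into `E`, and then `N_x ⧸ N` embeds into `U_y`. As `P_x` is local and `U_y` has all
composition factors in `S₁` and simple socle `S_y ∈ S₁ ∖ S₀`, the module `P_x ⧸ N` still has top
`S_x`, radical with factors in `S₁` and socle with factors in `S₁ ∖ S₀` (a simple submodule either
lies in `N_x ⧸ N`, or maps isomorphically into the socle of `U_x`). Maximality of `U_x` forces
`N = N_x`, so the lift is a splitting. -/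

section CompositionFactors

variable {R : Type} [Ring R] {M M' : Type} [AddCommGroup M] [Module R M]
  [AddCommGroup M'] [Module R M'] {𝒯 : Set (ModuleCat.{0} R)}

def SimpleSubmodulesIn (R : Type) [Ring R] (M : Type) [AddCommGroup M] [Module R M]
    (𝒯 : Set (ModuleCat.{0} R)) : Prop :=
  ∀ T : Submodule R M, IsAtom T → ∃ S ∈ 𝒯, Nonempty (↥T ≃ₗ[R] ↥S)

namespace AllCompFactorsIn

theorem mono {𝒯' : Set (ModuleCat.{0} R)} (h : AllCompFactorsIn R M 𝒯) (h𝒯 : 𝒯 ⊆ 𝒯') :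
    AllCompFactorsIn R M 𝒯' := fun N P hP =>
  let ⟨T, hT, e⟩ := h N P hP
  ⟨T, h𝒯 hT, e⟩

theorem exists_linearEquiv_of_surjective (h : AllCompFactorsIn R M 𝒯) (N : Submodule R M)
    {W : Type} [AddCommGroup W] [Module R W] [IsSimpleModule R W] (φ : N →ₗ[R] W)
    (hφ : Function.Surjective φ) : ∃ T ∈ 𝒯, Nonempty (W ≃ₗ[R] T) := by
  let e := φ.quotKerEquivOfSurjective hφ
  obtain ⟨T, hT, ⟨e'⟩⟩ := h N _ (IsSimpleModule.congr e)
  exact ⟨T, hT, ⟨e.symm.trans e'⟩⟩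

theorem exists_linearEquiv [IsSimpleModule R M] (h : AllCompFactorsIn R M 𝒯) :
    ∃ T ∈ 𝒯, Nonempty (M ≃ₗ[R] T) :=
  h.exists_linearEquiv_of_surjective ⊤ Submodule.topEquiv.toLinearMap
    Submodule.topEquiv.surjective

theorem of_injective (h : AllCompFactorsIn R M 𝒯) (f : M' →ₗ[R] M)
    (hf : Function.Injective f) : AllCompFactorsIn R M' 𝒯 := fun N P hP =>
  let e := Submodule.equivMapOfInjective f hf N
  have := hP
  h.exists_linearEquiv_of_surjective _ (P.mkQ ∘ₗ e.symm.toLinearMap)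
    ((Submodule.mkQ_surjective P).comp e.symm.surjective)

theorem of_ker (f : M →ₗ[R] M') (hker : AllCompFactorsIn R (LinearMap.ker f) 𝒯)
    (h' : AllCompFactorsIn R M' 𝒯) : AllCompFactorsIn R M 𝒯 := by
  intro N P hP
  have := hP
  let ψ : Submodule.comap (LinearMap.ker f).subtype N →ₗ[R] N ⧸ P :=
    P.mkQ ∘ₗ (LinearMap.ker f).subtype.restrict fun _ hx => hx
  rcases eq_bot_or_eq_top (LinearMap.range ψ) with hψ | hψ
  · -- `N ⊓ ker f ≤ P`, so `N ⧸ P` is a quotient of `f N ≤ M'`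
    let fN := f ∘ₗ N.subtype
    have hle : LinearMap.ker fN ≤ LinearMap.ker P.mkQ := fun x hx => by
      have : ψ ⟨⟨x, hx⟩, x.2⟩ = 0 := by
        rw [← Submodule.mem_bot R, ← hψ]
        exact LinearMap.mem_range_self _ _
      exact this
    exact h'.exists_linearEquiv_of_surjective (LinearMap.range fN)
      ((LinearMap.ker fN).liftQ P.mkQ hle ∘ₗ fN.quotKerEquivRange.symm.toLinearMap)
      fun w => by
        obtain ⟨x, rfl⟩ := P.mkQ_surjective w
        exact ⟨fN.quotKerEquivRange (Submodule.Quotient.mk x), by simp⟩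
  · exact hker.exists_linearEquiv_of_surjective _ ψ (LinearMap.range_eq_top.mp hψ)

end AllCompFactorsIn

theorem isAtom_range_of_injective [IsSimpleModule R M] {f : M →ₗ[R] M'}
    (hf : Function.Injective f) : IsAtom (LinearMap.range f) :=
  isSimpleModule_iff_isAtom.mp (IsSimpleModule.congr (LinearEquiv.ofInjective f hf).symm)

theorem eq_socle_of_isAtom (hs : IsSimpleModule R (socle R M)) {T : Submodule R M}
    (hT : IsAtom T) : T = socle R M :=
  ((isSimpleModule_iff_isAtom.mp hs).le_iff.mp (le_sSup hT)).resolve_left hT.1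

namespace SimpleSubmodulesIn

theorem exists_linearEquiv_of_injective (h : SimpleSubmodulesIn R M 𝒯) {W : Type}
    [AddCommGroup W] [Module R W] [IsSimpleModule R W] (f : W →ₗ[R] M)
    (hf : Function.Injective f) : ∃ S ∈ 𝒯, Nonempty (W ≃ₗ[R] S) :=
  let ⟨S, hS, ⟨e⟩⟩ := h _ (isAtom_range_of_injective hf)
  ⟨S, hS, ⟨(LinearEquiv.ofInjective f hf).trans e⟩⟩

theorem of_injective (h : SimpleSubmodulesIn R M 𝒯) (f : M' →ₗ[R] M)
    (hf : Function.Injective f) : SimpleSubmodulesIn R M' 𝒯 := fun T hT =>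
  have := isSimpleModule_iff_isAtom.mpr hT
  h.exists_linearEquiv_of_injective (f ∘ₗ T.subtype) (hf.comp T.injective_subtype)

theorem of_ker (f : M →ₗ[R] M') (hker : SimpleSubmodulesIn R (LinearMap.ker f) 𝒯)
    (h' : SimpleSubmodulesIn R M' 𝒯) : SimpleSubmodulesIn R M 𝒯 := by
  intro T hT
  have := isSimpleModule_iff_isAtom.mpr hT
  by_cases hTk : T ≤ LinearMap.ker f
  · exact hker.exists_linearEquiv_of_injective (Submodule.inclusion hTk)
      (Submodule.inclusion_injective hTk)
  · refine h'.exists_linearEquiv_of_injective (f ∘ₗ T.subtype) ?_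
    rw [← LinearMap.ker_eq_bot, LinearMap.ker_comp]
    exact (eq_bot_or_eq_top _).resolve_right (mt Submodule.comap_subtype_eq_top.mp hTk)

end SimpleSubmodulesIn

theorem allCompFactorsIn_socle_iff :
    AllCompFactorsIn R (socle R M) 𝒯 ↔ SimpleSubmodulesIn R M 𝒯 := by
  constructor
  · intro h T hT
    have := isSimpleModule_iff_isAtom.mpr hT
    exact (h.of_injective (Submodule.inclusion (le_sSup hT : T ≤ socle R M))
      (Submodule.inclusion_injective _)).exists_linearEquiv
  · intro h N P hP
    have : IsSemisimpleModule R (socle R M) := by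
      rw [socle, sSup_eq_iSup]
      exact isSemisimpleModule_biSup_of_isSemisimpleModule_submodule fun T hT =>
        have := isSimpleModule_iff_isAtom.mpr hT
        inferInstance
    obtain ⟨C, hC⟩ := exists_isCompl P
    let e : (N ⧸ P) ≃ₗ[R] C := Submodule.quotientEquivOfIsCompl P C hC
    have := hP
    have : IsSimpleModule R C := IsSimpleModule.congr e.symm
    let ι : C →ₗ[R] M := (socle R M).subtype ∘ₗ N.subtype ∘ₗ C.subtype
    have hι : Function.Injective ι :=
      (socle R M).injective_subtype.comp (N.injective_subtype.comp C.injective_subtype)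
    obtain ⟨S, hS, ⟨e'⟩⟩ := h.exists_linearEquiv_of_injective (W := C) ι hι
    exact ⟨S, hS, ⟨e.trans e'⟩⟩

end CompositionFactors

section Radical

variable {R : Type} [Ring R] {M M' : Type} [AddCommGroup M] [Module R M]
  [AddCommGroup M'] [Module R M']

theorem map_radical_le (f : M →ₗ[R] M') :
    Submodule.map f (radical R M) ≤ radical R M' :=
  le_sInf fun C hC => Submodule.map_le_iff_le_comap.mpr <| by
    rcases Submodule.isCoatom_comap_or_eq_top f hC with h | h
    · exact sInf_le (α := Submodule R M) (s := {N | IsCoatom N}) h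
    · exact h ▸ le_top

theorem allCompFactorsIn_radical_of_ker {𝒯 : Set (ModuleCat.{0} R)} (f : M →ₗ[R] M')
    (hker : AllCompFactorsIn R (LinearMap.ker f) 𝒯) (h' : AllCompFactorsIn R (radical R M') 𝒯) :
    AllCompFactorsIn R (radical R M) 𝒯 := by
  have hf : ∀ x ∈ radical R M, f x ∈ radical R M' := fun x hx =>
    map_radical_le f (Submodule.mem_map_of_mem hx)
  refine AllCompFactorsIn.of_ker (f.restrict hf) (hker.of_injective
    ((radical R M).subtype.restrict fun x hx => ?_) fun x y hxy => ?_) h'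
  · rwa [LinearMap.ker_restrict] at hx
  · have h := congrArg (fun z : LinearMap.ker f => (z : M)) hxy
    exact Subtype.ext (Subtype.ext h)

variable {X : Type} [AddCommGroup X] [Module R X] {𝔪 : Submodule R X}

theorem radical_eq_of_isCoatom_iff (h𝔪 : ∀ C : Submodule R X, IsCoatom C ↔ C = 𝔪) :
    radical R X = 𝔪 := by
  have : {C : Submodule R X | IsCoatom C} = {𝔪} := Set.ext h𝔪
  rw [radical, this, sInf_singleton]

theorem isCoatom_quotient_iff (h𝔪 : ∀ C : Submodule R X, IsCoatom C ↔ C = 𝔪)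
    {N : Submodule R X} (hN : N ≤ 𝔪) (C : Submodule R (X ⧸ N)) :
    IsCoatom C ↔ C = Submodule.map N.mkQ 𝔪 := by
  rw [← Submodule.isCoatom_comap_iff N.mkQ_surjective, h𝔪,
    ← (Submodule.comap_injective_of_surjective N.mkQ_surjective).eq_iff,
    Submodule.comap_map_mkQ, sup_eq_right.mpr hN]

theorem le_of_nontrivial_headOf (h𝔪 : ∀ C : Submodule R X, IsCoatom C ↔ C = 𝔪)
    {N : Submodule R X} [Nontrivial (headOf R (X ⧸ N))] : N ≤ 𝔪 := by
  obtain ⟨C, hC⟩ : ∃ C : Submodule R (X ⧸ N), IsCoatom C := by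
    by_contra! h
    have : radical R (X ⧸ N) = ⊤ := by
      have : {C : Submodule R (X ⧸ N) | IsCoatom C} = ∅ := Set.eq_empty_of_forall_notMem h
      rw [radical, this, sInf_empty]
    exact not_subsingleton (headOf R (X ⧸ N)) (Submodule.Quotient.subsingleton_iff.mpr this)
  rw [← Submodule.isCoatom_comap_iff N.mkQ_surjective, h𝔪] at hC
  exact hC ▸ (Submodule.ker_mkQ N).ge.trans (LinearMap.ker_le_comap _)

def headOfQuotientEquiv (h𝔪 : ∀ C : Submodule R X, IsCoatom C ↔ C = 𝔪) {N : Submodule R X}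
    (hN : N ≤ 𝔪) : headOf R (X ⧸ N) ≃ₗ[R] X ⧸ 𝔪 :=
  (Submodule.quotEquivOfEq _ _ (radical_eq_of_isCoatom_iff (isCoatom_quotient_iff h𝔪 hN))).trans
    (Submodule.quotientQuotientEquivQuotient N 𝔪 hN)

end Radical

section ProjectiveCover

variable {R : Type} [Ring R] {P M E : Type} [AddCommGroup P] [Module R P]
  [AddCommGroup M] [Module R M] [AddCommGroup E] [Module R E]

theorem IsProjectiveCover.isCoatom_iff [IsSimpleModule R M] {f : P →ₗ[R] M}
    (hf : IsProjectiveCover R P M f) (C : Submodule R P) : IsCoatom C ↔ C = LinearMap.ker f := by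
  have hker : IsCoatom (LinearMap.ker f) := isSimpleModule_iff_isCoatom.mp
    (IsSimpleModule.congr (f.quotKerEquivOfSurjective hf.2.1))
  refine ⟨fun hC => ?_, fun h => h ▸ hker⟩
  rcases eq_bot_or_eq_top (Submodule.map f C) with h | h
  · exact (hC.le_iff.mp (LinearMap.le_ker_iff_map.mpr h)).resolve_left hker.1 |>.symm
  · exact absurd (hf.2.2 C h) hC.1

theorem exists_injective_lift_of_projective [Module.Projective R P] (N' : Submodule R P)
    (p : E →ₗ[R] P ⧸ N') (hp : Function.Surjective p) :
    ∃ (N : Submodule R P) (hN : N ≤ N') (g : P ⧸ N →ₗ[R] E),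
      Function.Injective g ∧ p ∘ₗ g = Submodule.factor hN := by
  obtain ⟨g, hg⟩ := Module.projective_lifting_property p N'.mkQ hp
  have hN : LinearMap.ker g ≤ N' := fun x hx => by
    rw [← Submodule.Quotient.mk_eq_zero, ← Submodule.mkQ_apply, ← hg,
      LinearMap.comp_apply, LinearMap.mem_ker.mp hx, map_zero]
  refine ⟨_, hN, (LinearMap.ker g).liftQ g le_rfl, ?_, ?_⟩
  · rw [← LinearMap.ker_eq_bot]
    exact Submodule.ker_liftQ_eq_bot _ _ _ le_rfl
  · apply Submodule.linearMap_qext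
    rw [LinearMap.comp_assoc, Submodule.liftQ_mkQ, hg, Submodule.factor_comp_mk]

end ProjectiveCover

theorem exists_injective_ker_of_exact {R U E M M' : Type} [Ring R] [AddCommGroup U] [Module R U]
    [AddCommGroup E] [Module R E] [AddCommGroup M] [Module R M] [AddCommGroup M'] [Module R M']
    {i : U →ₗ[R] E} (hi : Function.Injective i) {p : E →ₗ[R] M}
    (hexact : LinearMap.range i = LinearMap.ker p) {g : M' →ₗ[R] E}
    (hg : Function.Injective g) {q : M' →ₗ[R] M} (hq : p ∘ₗ g = q) :
    ∃ j : LinearMap.ker q →ₗ[R] U, Function.Injective j := by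
  subst hq
  have hmem : ∀ y : LinearMap.ker (p ∘ₗ g), g y ∈ LinearMap.range i := fun y => by
    rw [hexact]; exact y.2
  refine ⟨(LinearEquiv.ofInjective i hi).symm.toLinearMap ∘ₗ
    (g ∘ₗ (LinearMap.ker (p ∘ₗ g)).subtype).codRestrict _ hmem, fun a b hab => ?_⟩
  have h := congrArg Subtype.val ((LinearEquiv.ofInjective i hi).symm.injective hab)
  exact Subtype.ext (hg h)

theorem statement_4_general
    (A : Type) [Ring A]
    (S₀ S₁ : Set (Mod A)) (hsub : S₀ ⊆ S₁)
    (Sx Sy : Mod A) (hSx : IsSimpleModule Aᵐᵒᵖ Sx) (hSy : IsSimpleModule Aᵐᵒᵖ Sy)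
    (hy1 : ∃ T ∈ S₁, Nonempty ((Sy : Type) ≃ₗ[Aᵐᵒᵖ] (T : Type)))
    (hy0 : ¬∃ T ∈ S₀, Nonempty ((Sy : Type) ≃ₗ[Aᵐᵒᵖ] (T : Type)))
    -- U_y : the universal extension inside the injective hull of S_y
    (Iy : Mod A)
    (Uy : Submodule Aᵐᵒᵖ Iy)
    (hUy : Nonempty ((↥(socle Aᵐᵒᵖ ↥Uy)) ≃ₗ[Aᵐᵒᵖ] (Sy : Type)) ∧
      AllCompFactorsIn Aᵐᵒᵖ (↥Uy ⧸ socle Aᵐᵒᵖ ↥Uy) S₀)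
    -- U_x : the largest quotient of the projective cover of S_x
    (Px : Mod A) (px : (Px : Type) →ₗ[Aᵐᵒᵖ] (Sx : Type))
    (hPx : IsProjectiveCover Aᵐᵒᵖ Px Sx px)
    (Nx : Submodule Aᵐᵒᵖ Px)
    (hNx : Nonempty ((headOf Aᵐᵒᵖ ((Px : Type) ⧸ Nx)) ≃ₗ[Aᵐᵒᵖ] (Sx : Type)) ∧
      AllCompFactorsIn Aᵐᵒᵖ (↥(radical Aᵐᵒᵖ ((Px : Type) ⧸ Nx))) S₁ ∧
      AllCompFactorsIn Aᵐᵒᵖ (↥(socle Aᵐᵒᵖ ((Px : Type) ⧸ Nx))) (S₁ \ S₀))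
    (hNxmin : ∀ N : Submodule Aᵐᵒᵖ Px,
      (Nonempty ((headOf Aᵐᵒᵖ ((Px : Type) ⧸ N)) ≃ₗ[Aᵐᵒᵖ] (Sx : Type)) ∧
        AllCompFactorsIn Aᵐᵒᵖ (↥(radical Aᵐᵒᵖ ((Px : Type) ⧸ N))) S₁ ∧
        AllCompFactorsIn Aᵐᵒᵖ (↥(socle Aᵐᵒᵖ ((Px : Type) ⧸ N))) (S₁ \ S₀)) → Nx ≤ N) :
    -- Ext¹(U_x, U_y) = 0 : every extension of U_x by U_y splits
    ∀ (E : Type) (_ : AddCommGroup E) (_ : Module Aᵐᵒᵖ E)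
      (i : ↥Uy →ₗ[Aᵐᵒᵖ] E) (p : E →ₗ[Aᵐᵒᵖ] ((Px : Type) ⧸ Nx)),
      Function.Injective i → Function.Surjective p → LinearMap.range i = LinearMap.ker p →
      ∃ s : ((Px : Type) ⧸ Nx) →ₗ[Aᵐᵒᵖ] E, p ∘ₗ s = LinearMap.id := by
  intro E _ _ i p hi hp hexact
  have h𝔪 := hPx.isCoatom_iff
  have : Module.Projective Aᵐᵒᵖ Px := hPx.1
  obtain ⟨eSx⟩ := hNx.1
  have : Nontrivial (headOf Aᵐᵒᵖ ((Px : Type) ⧸ Nx)) :=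
    have := IsSimpleModule.nontrivial Aᵐᵒᵖ Sx
    eSx.toEquiv.nontrivial
  have hNx𝔪 : Nx ≤ LinearMap.ker px := le_of_nontrivial_headOf h𝔪
  obtain ⟨N, hNNx, g, hg, hpg⟩ := exists_injective_lift_of_projective Nx p hp
  obtain ⟨j, hj⟩ := exists_injective_ker_of_exact hi hexact hg hpg
  obtain ⟨T₁, hT₁, ⟨eyT⟩⟩ := hy1
  obtain ⟨esoc⟩ := hUy.1
  have hUyAtoms : SimpleSubmodulesIn Aᵐᵒᵖ Uy (S₁ \ S₀) := fun T hT =>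
    ⟨T₁, ⟨hT₁, fun h₀ => hy0 ⟨T₁, h₀, ⟨eyT⟩⟩⟩,
      ⟨(LinearEquiv.ofEq _ _ (eq_socle_of_isAtom (IsSimpleModule.congr esoc) hT)).trans
        (esoc.trans eyT)⟩⟩
  have hUyS₁ : AllCompFactorsIn Aᵐᵒᵖ Uy S₁ :=
    .of_ker (socle Aᵐᵒᵖ Uy).mkQ
      (by
        rw [Submodule.ker_mkQ]
        exact (allCompFactorsIn_socle_iff.mpr hUyAtoms).mono Set.sdiff_subset)
      (hUy.2.mono hsub)
  have hNxN : Nx ≤ N := hNxmin N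
    ⟨⟨(headOfQuotientEquiv h𝔪 (hNNx.trans hNx𝔪)).trans
        ((headOfQuotientEquiv h𝔪 hNx𝔪).symm.trans eSx)⟩,
      allCompFactorsIn_radical_of_ker _ (hUyS₁.of_injective j hj) hNx.2.1,
      allCompFactorsIn_socle_iff.mpr
        ((hUyAtoms.of_injective j hj).of_ker _ (allCompFactorsIn_socle_iff.mp hNx.2.2))⟩
  refine ⟨g ∘ₗ Submodule.factor hNxN, ?_⟩
  rw [← LinearMap.comp_assoc, hpg]
  ext x
  rfl

/-- **Vanishing of `Ext¹` between the canonical quotients and the universal extensions.**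
With `S₀ ⊆ S₁` sets of simple right `A`-modules, `S_y` simple with class in `S₁ ∖ S₀`,
`S_x` simple with class not in `S₁`, `U_y` the largest submodule of the injective hull of
`S_y` with socle `S_y` and all other composition factors in `S₀`, and `U_x` the largest
quotient of the projective cover of `S_x` with top `S_x`, all other composition factors in
`S₁` and all composition factors of its socle in `S₁ ∖ S₀`, one has `Ext¹_A(U_x, U_y) = 0`;
equivalently every short exact sequence `0 → U_y → E → U_x → 0` splits. -/
theorem statement_4 (k : Type) [Field k]
    (A : Type) [Ring A] [Algebra k A] [FiniteDimensional k A]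
    (S₀ S₁ : Set (Mod A)) (hsub : S₀ ⊆ S₁)
    (hS₁ : ∀ T ∈ S₁, IsSimpleModule Aᵐᵒᵖ (T : Type))
    (Sx Sy : Mod A) (hSx : IsSimpleModule Aᵐᵒᵖ Sx) (hSy : IsSimpleModule Aᵐᵒᵖ Sy)
    (hy1 : ∃ T ∈ S₁, Nonempty ((Sy : Type) ≃ₗ[Aᵐᵒᵖ] (T : Type)))
    (hy0 : ¬∃ T ∈ S₀, Nonempty ((Sy : Type) ≃ₗ[Aᵐᵒᵖ] (T : Type)))
    (hx1 : ¬∃ T ∈ S₁, Nonempty ((Sx : Type) ≃ₗ[Aᵐᵒᵖ] (T : Type)))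
    -- U_y : the universal extension inside the injective hull of S_y
    (Iy : Mod A) (iy : (Sy : Type) →ₗ[Aᵐᵒᵖ] (Iy : Type))
    (hIy : IsInjectiveHull Aᵐᵒᵖ Iy Sy iy)
    (Uy : Submodule Aᵐᵒᵖ Iy)
    (hUy : Nonempty ((↥(socle Aᵐᵒᵖ ↥Uy)) ≃ₗ[Aᵐᵒᵖ] (Sy : Type)) ∧
      AllCompFactorsIn Aᵐᵒᵖ (↥Uy ⧸ socle Aᵐᵒᵖ ↥Uy) S₀)
    (hUymax : ∀ U : Submodule Aᵐᵒᵖ Iy,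
      (Nonempty ((↥(socle Aᵐᵒᵖ ↥U)) ≃ₗ[Aᵐᵒᵖ] (Sy : Type)) ∧
        AllCompFactorsIn Aᵐᵒᵖ (↥U ⧸ socle Aᵐᵒᵖ ↥U) S₀) → U ≤ Uy)
    -- U_x : the largest quotient of the projective cover of S_x
    (Px : Mod A) (px : (Px : Type) →ₗ[Aᵐᵒᵖ] (Sx : Type))
    (hPx : IsProjectiveCover Aᵐᵒᵖ Px Sx px)
    (Nx : Submodule Aᵐᵒᵖ Px)
    (hNx : Nonempty ((headOf Aᵐᵒᵖ ((Px : Type) ⧸ Nx)) ≃ₗ[Aᵐᵒᵖ] (Sx : Type)) ∧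
      AllCompFactorsIn Aᵐᵒᵖ (↥(radical Aᵐᵒᵖ ((Px : Type) ⧸ Nx))) S₁ ∧
      AllCompFactorsIn Aᵐᵒᵖ (↥(socle Aᵐᵒᵖ ((Px : Type) ⧸ Nx))) (S₁ \ S₀))
    (hNxmin : ∀ N : Submodule Aᵐᵒᵖ Px,
      (Nonempty ((headOf Aᵐᵒᵖ ((Px : Type) ⧸ N)) ≃ₗ[Aᵐᵒᵖ] (Sx : Type)) ∧
        AllCompFactorsIn Aᵐᵒᵖ (↥(radical Aᵐᵒᵖ ((Px : Type) ⧸ N))) S₁ ∧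
        AllCompFactorsIn Aᵐᵒᵖ (↥(socle Aᵐᵒᵖ ((Px : Type) ⧸ N))) (S₁ \ S₀)) → Nx ≤ N) :
    -- Ext¹(U_x, U_y) = 0 : every extension of U_x by U_y splits
    ∀ (E : Type) (_ : AddCommGroup E) (_ : Module Aᵐᵒᵖ E)
      (i : ↥Uy →ₗ[Aᵐᵒᵖ] E) (p : E →ₗ[Aᵐᵒᵖ] ((Px : Type) ⧸ Nx)),
      Function.Injective i → Function.Surjective p → LinearMap.range i = LinearMap.ker p →
      ∃ s : ((Px : Type) ⧸ Nx) →ₗ[Aᵐᵒᵖ] E, p ∘ₗ s = LinearMap.id :=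
  statement_4_general A S₀ S₁ hsub Sx Sy hSx hSy hy1 hy0 Iy Uy hUy Px px hPx Nx hNx hNxmin

end PervSL2
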